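/- Let p be an odd prime and A ⊆ 𝔽_p^n the zero set of x ↦ xᵀx. Define f : 𝔽_p^n → ℂ via its Fourier coefficients by f̂(0) = 0 and f̂(h) = (1_A(h) − p^{−1})/(p^{n/2}+1) for h ≠ 0. Then f is real-valued, 𝔼_x f(x) = 0, and |f(x)| ≤ 1 for all x ∈ 𝔽_p^n. -/

import Mathlib

open Finset

/-- `e_p(a) = e^{2πi a/p}`. -/
noncomputable def ep (p : ℕ) (a : ZMod p) : ℂ :=
  Complex.exp (2 * Real.pi * Complex.I * ((a.val : ℕ) : ℂ) / (p : ℂ))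

/-- The function `f : 𝔽_p^n → ℂ` defined by Fourier inversion from the coefficients
`f̂(0) = 0` and `f̂(h) = (1_A(h) − p⁻¹)/(p^{n/2} + 1)` for `h ≠ 0`, where `A` is the
zero set of `x ↦ xᵀx`. -/
noncomputable def fquad (p n : ℕ) [NeZero p] : (Fin n → ZMod p) → ℂ :=
  fun x => ∑ h : Fin n → ZMod p,
    (if h = 0 then 0 else
      ((if ∑ j, h j ^ 2 = 0 then (1 : ℂ) else 0) - (p : ℂ)⁻¹) /
        ((p : ℂ) ^ ((n : ℂ) / 2) + 1)) * ep p (∑ j, h j * x j)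

/-!
Writing `A` for the zero set of `q(h) = hᵀh`, orthogonality of characters gives
`1_A(h) − p⁻¹ = p⁻¹ ∑_{a ≠ 0} e_p(a q(h))`. Substituting this into the Fourier series and
factoring the sum over `h` coordinatewise gives
`f(x) = (p (p^{n/2} + 1))⁻¹ ∑_{a ≠ 0} (∏ⱼ S(a, xⱼ) − 1)`, with the Gauss sums
`S(a, u) = ∑ₜ e_p(a t² + u t)` of modulus `√p`. Each of the `p − 1` summands therefore has
modulus at most `p^{n/2} + 1`, whence `|f(x)| ≤ (p − 1)/p`. The coefficients are real and even
in `h`, so `f` is real, and `f̂(0) = 0` gives mean zero.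
-/

lemma AddChar.map_sum_eq_prod {A M ι : Type*} [AddCommMonoid A] [CommMonoid M]
    (ψ : AddChar A M) (s : Finset ι) (g : ι → A) :
    ψ (∑ i ∈ s, g i) = ∏ i ∈ s, ψ (g i) := by
  classical
  induction s using Finset.induction_on with
  | empty => simp
  | insert a s ha ih => rw [sum_insert ha, prod_insert ha, ψ.map_add_eq_mul, ih]

section CharacterSums

variable {R : Type*} [CommRing R] [Fintype R] [DecidableEq R]
  {ψ : AddChar R ℂ} (hψ : ψ.IsPrimitive)
include hψ

lemma sum_addChar_dotProduct_eq_zero {ι : Type*} [Fintype ι] [DecidableEq ι]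
    {h : ι → R} (hh : h ≠ 0) : ∑ x : ι → R, ψ (∑ j, h j * x j) = 0 := by
  obtain ⟨j₀, hj₀⟩ : ∃ j, h j ≠ 0 := Function.ne_iff.mp hh
  calc ∑ x : ι → R, ψ (∑ j, h j * x j) = ∑ x : ι → R, ∏ j, ψ (h j * x j) := by
        simp_rw [ψ.map_sum_eq_prod]
    _ = ∏ j, ∑ t, ψ (h j * t) := (Fintype.prod_sum fun j t => ψ (h j * t)).symm
    _ = 0 := prod_eq_zero (mem_univ j₀) <| by
        simp_rw [mul_comm (h j₀)]
        rw [AddChar.sum_mulShift _ hψ, if_neg hj₀, Nat.cast_zero]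

lemma ite_sub_inv_card_eq_sum_addChar (s : R) :
    (if s = 0 then 1 else 0) - (Fintype.card R : ℂ)⁻¹
      = (Fintype.card R : ℂ)⁻¹ * ∑ a ∈ univ.erase 0, ψ (a * s) := by
  have hcard : (Fintype.card R : ℂ) ≠ 0 := Nat.cast_ne_zero.mpr Fintype.card_ne_zero
  rw [sum_erase_eq_sub (mem_univ 0), AddChar.sum_mulShift _ hψ]
  by_cases hs : s = 0 <;> simp [hs, mul_sub, hcard]

end CharacterSums

noncomputable def quadSum {R : Type*} [CommRing R] [Fintype R] (ψ : AddChar R ℂ) (a u : R) : ℂ :=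
  ∑ t, ψ (a * t ^ 2 + u * t)

lemma sum_addChar_quadratic_eq_prod_quadSum {R ι : Type*} [CommRing R] [Fintype R]
    [Fintype ι] [DecidableEq ι] (ψ : AddChar R ℂ) (a : R) (x : ι → R) :
    ∑ h : ι → R, ψ (a * ∑ j, h j ^ 2 + ∑ j, h j * x j) = ∏ j, quadSum ψ a (x j) := by
  have hsplit (h : ι → R) :
      a * ∑ j, h j ^ 2 + ∑ j, h j * x j = ∑ j, (a * h j ^ 2 + x j * h j) := by
    rw [mul_sum, ← sum_add_distrib]
    exact sum_congr rfl fun j _ => by ring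
  simp_rw [hsplit, ψ.map_sum_eq_prod, quadSum, Fintype.prod_sum]

section FiniteField

variable {F : Type*} [Field F] [Fintype F] [DecidableEq F]
  {ψ : AddChar F ℂ} (hψ : ψ.IsPrimitive)
include hψ

lemma quadSum_mul_conj (h2 : (2 : F) ≠ 0) {a : F} (ha : a ≠ 0) (u : F) :
    quadSum ψ a u * starRingEnd ℂ (quadSum ψ a u) = Fintype.card F := by
  -- substituting `s = d + t` makes the phase linear in `t`
  have hshift (d : F) : ∑ t, ψ (a * (d + t) ^ 2 + u * (d + t) - (a * t ^ 2 + u * t))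
      = (if d = 0 then (Fintype.card F : ℂ) else 0) := by
    have hlin (t : F) : a * (d + t) ^ 2 + u * (d + t) - (a * t ^ 2 + u * t)
        = t * (2 * a * d) + (a * d ^ 2 + u * d) := by ring
    simp_rw [hlin, ψ.map_add_eq_mul, ← sum_mul, AddChar.sum_mulShift _ hψ]
    by_cases hd : d = 0 <;> simp [hd, h2, ha]
  rw [quadSum, map_sum, sum_mul_sum, sum_comm]
  simp_rw [← AddChar.map_neg_eq_conj, ← ψ.map_add_eq_mul, ← sub_eq_add_neg]
  rw [← sum_congr rfl fun t _ => Equiv.sum_comp (Equiv.addRight t)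
    fun s => ψ (a * s ^ 2 + u * s - (a * t ^ 2 + u * t))]
  simp only [Equiv.coe_addRight]
  rw [sum_comm]
  simp_rw [hshift, sum_ite_eq' univ (0 : F), if_pos (mem_univ _)]

lemma norm_quadSum (h2 : (2 : F) ≠ 0) {a : F} (ha : a ≠ 0) (u : F) :
    ‖quadSum ψ a u‖ = √(Fintype.card F) := by
  have h := quadSum_mul_conj hψ h2 ha u
  rw [Complex.mul_conj'] at h
  rw [← Real.sqrt_sq (norm_nonneg _)]
  exact congrArg Real.sqrt (by exact_mod_cast h)

end FiniteField

open ZMod (stdAddChar)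

lemma ep_eq_stdAddChar (p : ℕ) [NeZero p] (a : ZMod p) : ep p a = stdAddChar a := by
  rw [ep, ZMod.stdAddChar_apply, ZMod.toCircle_apply]

lemma natCast_cpow_half_eq_sqrt_pow (p n : ℕ) :
    (p : ℂ) ^ ((n : ℂ) / 2) = ((√p ^ n : ℝ) : ℂ) := by
  rw [div_eq_mul_one_div, Complex.cpow_nat_mul, Complex.ofReal_pow, Real.sqrt_eq_rpow,
    Complex.ofReal_cpow (Nat.cast_nonneg p)]
  norm_num

noncomputable def fquadCoeff (p n : ℕ) (h : Fin n → ZMod p) : ℂ :=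
  if h = 0 then 0 else
    ((if ∑ j, h j ^ 2 = 0 then (1 : ℂ) else 0) - (p : ℂ)⁻¹) / ((p : ℂ) ^ ((n : ℂ) / 2) + 1)

lemma fquad_eq_sum_fquadCoeff (p n : ℕ) [NeZero p] (x : Fin n → ZMod p) :
    fquad p n x = ∑ h, fquadCoeff p n h * stdAddChar (∑ j, h j * x j) := by
  simp only [fquad, fquadCoeff, ep_eq_stdAddChar]

lemma fquadCoeff_zero (p n : ℕ) : fquadCoeff p n 0 = 0 := if_pos rfl

lemma fquadCoeff_neg (p n : ℕ) (h : Fin n → ZMod p) : fquadCoeff p n (-h) = fquadCoeff p n h := by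
  simp [fquadCoeff]

lemma conj_fquadCoeff (p n : ℕ) (h : Fin n → ZMod p) :
    starRingEnd ℂ (fquadCoeff p n h) = fquadCoeff p n h := by
  simp only [fquadCoeff, natCast_cpow_half_eq_sqrt_pow]
  split_ifs <;> simp [map_sub, map_div₀]

section Prime

variable {p : ℕ} [Fact p.Prime]

lemma fquad_eq_sum_prod_quadSum (n : ℕ) (x : Fin n → ZMod p) :
    fquad p n x = ((p : ℂ) * ((√p ^ n : ℝ) + 1))⁻¹ *
      ∑ a ∈ univ.erase 0, (∏ j, quadSum stdAddChar a (x j) - 1) := by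
  set G : (Fin n → ZMod p) → ℂ := fun h =>
    ((if ∑ j, h j ^ 2 = 0 then (1 : ℂ) else 0) - (p : ℂ)⁻¹) * stdAddChar (∑ j, h j * x j)
  have hG (h : Fin n → ZMod p) : G h = (p : ℂ)⁻¹ *
      ∑ a ∈ univ.erase 0, stdAddChar (a * ∑ j, h j ^ 2 + ∑ j, h j * x j) := by
    have hind := ite_sub_inv_card_eq_sum_addChar (ZMod.isPrimitive_stdAddChar p) (∑ j, h j ^ 2)
    rw [ZMod.card] at hind
    simp only [G, hind, mul_assoc, sum_mul, AddChar.map_add_eq_mul]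
  have hfquad : fquad p n x = (∑ h, G h - G 0) / ((√p ^ n : ℝ) + 1) := by
    have hcoeff (h : Fin n → ZMod p) (hh : h ∈ univ.erase 0) :
        fquadCoeff p n h * stdAddChar (∑ j, h j * x j) = G h / ((√p ^ n : ℝ) + 1) := by
      rw [fquadCoeff, if_neg (ne_of_mem_erase hh), natCast_cpow_half_eq_sqrt_pow,
        div_mul_eq_mul_div]
    rw [fquad_eq_sum_fquadCoeff, ← sum_erase_add _ _ (mem_univ 0), fquadCoeff_zero, zero_mul,
      add_zero, sum_congr rfl hcoeff, ← sum_div, sum_erase_eq_sub (mem_univ 0)]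
  have hsum : ∑ h, G h = (p : ℂ)⁻¹ * ∑ a ∈ univ.erase 0, ∏ j, quadSum stdAddChar a (x j) := by
    simp_rw [hG, ← mul_sum]
    rw [sum_comm]
    simp_rw [sum_addChar_quadratic_eq_prod_quadSum]
  have hzero : G 0 = (p : ℂ)⁻¹ * ∑ _a ∈ univ.erase (0 : ZMod p), 1 := by
    simp [hG]
  rw [hfquad, hsum, hzero, ← mul_sub, ← sum_sub_distrib, mul_inv, div_eq_mul_inv]
  ring

lemma norm_fquad_le_one (hp : Odd p) (n : ℕ) (x : Fin n → ZMod p) : ‖fquad p n x‖ ≤ 1 := by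
  have h2 : (2 : ZMod p) ≠ 0 := Ring.two_ne_zero <| by
    rw [ZMod.ringChar_zmod_n]
    rintro rfl
    exact absurd hp (by decide)
  set B : ℝ := √p ^ n + 1
  have hpB : 0 < p * B := mul_pos (Nat.cast_pos.mpr (Fact.out : p.Prime).pos) (by positivity)
  have hterm (a : ZMod p) (ha : a ∈ univ.erase 0) :
      ‖∏ j, quadSum stdAddChar a (x j) - 1‖ ≤ B := by
    calc _ ≤ ‖∏ j, quadSum stdAddChar a (x j)‖ + ‖(1 : ℂ)‖ := norm_sub_le _ _
      _ = B := by
        rw [norm_prod, prod_congr rfl fun j _ => norm_quadSum (ZMod.isPrimitive_stdAddChar p) h2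
          (ne_of_mem_erase ha) (x j), ZMod.card, prod_const, card_univ, Fintype.card_fin,
          norm_one]
  have hnorm : ‖(p : ℂ) * ((√p ^ n : ℝ) + 1)‖ = p * B := by
    rw [norm_mul, Complex.norm_natCast, ← Complex.ofReal_one, ← Complex.ofReal_add,
      Complex.norm_real, Real.norm_of_nonneg (by positivity)]
  calc ‖fquad p n x‖
        = (p * B)⁻¹ * ‖∑ a ∈ univ.erase 0, (∏ j, quadSum stdAddChar a (x j) - 1)‖ := by
        rw [fquad_eq_sum_prod_quadSum, norm_mul, norm_inv, hnorm]
    _ ≤ (p * B)⁻¹ * (#(univ.erase (0 : ZMod p)) • B) := by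
        gcongr
        exact (norm_sum_le _ _).trans (sum_le_card_nsmul _ _ _ hterm)
    _ ≤ (p * B)⁻¹ * (p * B) := by
        rw [nsmul_eq_mul]
        gcongr
        exact_mod_cast card_erase_le.trans_eq (ZMod.card p)
    _ = 1 := inv_mul_cancel₀ hpB.ne'

end Prime

section NeZero

variable {p : ℕ} [NeZero p]

lemma sum_fquad_eq_zero (n : ℕ) : ∑ x, fquad p n x = 0 := by
  simp_rw [fquad_eq_sum_fquadCoeff]
  rw [sum_comm]
  refine sum_eq_zero fun h _ => ?_
  rw [← mul_sum]
  by_cases hh : h = 0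
  · rw [hh, fquadCoeff_zero, zero_mul]
  · rw [sum_addChar_dotProduct_eq_zero (ZMod.isPrimitive_stdAddChar p) hh, mul_zero]

lemma conj_fquad (n : ℕ) (x : Fin n → ZMod p) : starRingEnd ℂ (fquad p n x) = fquad p n x := by
  rw [fquad_eq_sum_fquadCoeff, map_sum]
  simp_rw [map_mul, conj_fquadCoeff, ← AddChar.map_neg_eq_conj, ← sum_neg_distrib, ← neg_mul]
  refine Fintype.sum_equiv (Equiv.neg _) _ _ fun h => ?_
  simp only [Equiv.neg_apply, fquadCoeff_neg, Pi.neg_apply]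

end NeZero

/-- The function `fquad` is real-valued, has mean zero, and takes values in `[−1, 1]`. -/
theorem fquad_properties (p : ℕ) [Fact p.Prime] (hp : Odd p) (n : ℕ) :
    (∀ x, (fquad p n x).im = 0) ∧
    (∑ x : Fin n → ZMod p, fquad p n x = 0) ∧
    (∀ x, ‖fquad p n x‖ ≤ 1) :=
  ⟨fun x => Complex.conj_eq_iff_im.mp (conj_fquad n x), sum_fquad_eq_zero n,
    norm_fquad_le_one hp n⟩
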